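/- Let U ⊆ ℝ² be open and let f = (x,y,z,p,q) : U → ℝ⁵ be a smooth map satisfying the contact condition on U and the Hess = −1 condition Jac(x,y) + Jac(p,q) = 0 on U. Then at every point of U both Monge characteristic Jacobians vanish: Jac(x+q, y−p) = 0 and Jac(x−q, y+p) = 0, where x+q denotes the function a ↦ x(a)+q(a), etc. -/

import Mathlib

noncomputable section

/-- Partial derivative in the direction `(1,0)`. -/
def pu (g : ℝ × ℝ → ℝ) (a : ℝ × ℝ) : ℝ := fderiv ℝ g a (1, 0)

/-- Partial derivative in the direction `(0,1)`. -/
def pv (g : ℝ × ℝ → ℝ) (a : ℝ × ℝ) : ℝ := fderiv ℝ g a (0, 1)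

/-- Jacobian determinant `g_u h_v - g_v h_u`. -/
def Jac (g h : ℝ × ℝ → ℝ) (a : ℝ × ℝ) : ℝ := pu g a * pv h a - pv g a * pu h a

lemma hasFDerivAt_eval (g : ℝ × ℝ → ℝ) (a : ℝ × ℝ) (hg : ContDiffAt ℝ 2 g a) (w : ℝ × ℝ) :
    HasFDerivAt (fun b => fderiv ℝ g b w)
      ((ContinuousLinearMap.apply ℝ ℝ w).comp (fderiv ℝ (fderiv ℝ g) a)) a := by
  have h1 : ContDiffAt ℝ 1 (fderiv ℝ g) a := hg.fderiv_right (by norm_num)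
  have h2 : DifferentiableAt ℝ (fderiv ℝ g) a := h1.differentiableAt one_ne_zero
  exact (ContinuousLinearMap.apply ℝ ℝ w).hasFDerivAt.comp a h2.hasFDerivAt

/-- The derivative at `a` of `b ↦ z_w(b) - (p(b) x_w(b) + q(b) y_w(b))`, evaluated at
direction `v`, where `_w` is the directional derivative in direction `w`. -/
lemma contact_deriv (x y z p q : ℝ × ℝ → ℝ) (a : ℝ × ℝ)
    (hx : ContDiffAt ℝ 2 x a) (hy : ContDiffAt ℝ 2 y a) (hz : ContDiffAt ℝ 2 z a)
    (hp : ContDiffAt ℝ 2 p a) (hq : ContDiffAt ℝ 2 q a) (w : ℝ × ℝ)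
    (h0 : (fun b => fderiv ℝ z b w - (p b * fderiv ℝ x b w + q b * fderiv ℝ y b w))
      =ᶠ[nhds a] fun _ => 0) (v : ℝ × ℝ) :
    fderiv ℝ (fderiv ℝ z) a v w -
      (p a * fderiv ℝ (fderiv ℝ x) a v w + fderiv ℝ x a w * fderiv ℝ p a v +
        (q a * fderiv ℝ (fderiv ℝ y) a v w + fderiv ℝ y a w * fderiv ℝ q a v)) = 0 := by
  have hp' : HasFDerivAt p (fderiv ℝ p a) a :=
    (hp.differentiableAt (by norm_num)).hasFDerivAt
  have hq' : HasFDerivAt q (fderiv ℝ q a) a :=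
    (hq.differentiableAt (by norm_num)).hasFDerivAt
  have hF : HasFDerivAt
      (fun b => fderiv ℝ z b w - (p b * fderiv ℝ x b w + q b * fderiv ℝ y b w))
      ((ContinuousLinearMap.apply ℝ ℝ w).comp (fderiv ℝ (fderiv ℝ z) a) -
        ((p a • ((ContinuousLinearMap.apply ℝ ℝ w).comp (fderiv ℝ (fderiv ℝ x) a)) +
            fderiv ℝ x a w • fderiv ℝ p a) +
          (q a • ((ContinuousLinearMap.apply ℝ ℝ w).comp (fderiv ℝ (fderiv ℝ y) a)) +
            fderiv ℝ y a w • fderiv ℝ q a))) a :=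
    (hasFDerivAt_eval z a hz w).sub
      ((hp'.mul (hasFDerivAt_eval x a hx w)).add (hq'.mul (hasFDerivAt_eval y a hy w)))
  have hzero : fderiv ℝ
      (fun b => fderiv ℝ z b w - (p b * fderiv ℝ x b w + q b * fderiv ℝ y b w)) a = 0 := by
    rw [h0.fderiv_eq]; exact fderiv_const_apply 0
  have := hF.fderiv
  rw [hzero] at this
  have h2 := congrArg (fun (L : ℝ × ℝ →L[ℝ] ℝ) => L v) this.symm
  simpa using h2

set_option maxHeartbeats 1000000 in
theorem stmt16 (U : Set (ℝ × ℝ)) (hU : IsOpen U)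
    (x y z p q : ℝ × ℝ → ℝ)
    (hx : ContDiffOn ℝ (⊤ : ℕ∞) x U) (hy : ContDiffOn ℝ (⊤ : ℕ∞) y U)
    (hz : ContDiffOn ℝ (⊤ : ℕ∞) z U) (hp : ContDiffOn ℝ (⊤ : ℕ∞) p U)
    (hq : ContDiffOn ℝ (⊤ : ℕ∞) q U)
    (hcontact : ∀ a ∈ U, pu z a = p a * pu x a + q a * pu y a ∧
      pv z a = p a * pv x a + q a * pv y a)
    (hhess : ∀ a ∈ U, Jac x y a + Jac p q a = 0) :
    ∀ a ∈ U,
      Jac (fun b => x b + q b) (fun b => y b - p b) a = 0 ∧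
      Jac (fun b => x b - q b) (fun b => y b + p b) a = 0 := by
  intro a ha
  have hmem := hU.mem_nhds ha
  have hx2 : ContDiffAt ℝ 2 x a := (hx.contDiffAt hmem).of_le (WithTop.coe_le_coe.mpr le_top)
  have hy2 : ContDiffAt ℝ 2 y a := (hy.contDiffAt hmem).of_le (WithTop.coe_le_coe.mpr le_top)
  have hz2 : ContDiffAt ℝ 2 z a := (hz.contDiffAt hmem).of_le (WithTop.coe_le_coe.mpr le_top)
  have hp2 : ContDiffAt ℝ 2 p a := (hp.contDiffAt hmem).of_le (WithTop.coe_le_coe.mpr le_top)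
  have hq2 : ContDiffAt ℝ 2 q a := (hq.contDiffAt hmem).of_le (WithTop.coe_le_coe.mpr le_top)
  -- the two differentiated contact conditions
  have h0u : (fun b => fderiv ℝ z b (1, 0) -
      (p b * fderiv ℝ x b (1, 0) + q b * fderiv ℝ y b (1, 0))) =ᶠ[nhds a] fun _ => 0 := by
    filter_upwards [hmem] with b hb
    have := (hcontact b hb).1
    simp only [pu] at this
    simp [this]
  have h0v : (fun b => fderiv ℝ z b (0, 1) -
      (p b * fderiv ℝ x b (0, 1) + q b * fderiv ℝ y b (0, 1))) =ᶠ[nhds a] fun _ => 0 := by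
    filter_upwards [hmem] with b hb
    have := (hcontact b hb).2
    simp only [pv] at this
    simp [this]
  have e1 := contact_deriv x y z p q a hx2 hy2 hz2 hp2 hq2 (1, 0) h0u (0, 1)
  have e2 := contact_deriv x y z p q a hx2 hy2 hz2 hp2 hq2 (0, 1) h0v (1, 0)
  -- symmetry of second derivatives
  have sx := hx2.isSymmSndFDerivAt (by simp) (1, 0) (0, 1)
  have sy := hy2.isSymmSndFDerivAt (by simp) (1, 0) (0, 1)
  have sz := hz2.isSymmSndFDerivAt (by simp) (1, 0) (0, 1)
  -- the key identity: Jac x p + Jac y q = 0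
  rw [sx, sy, sz] at e2
  have key : Jac x p a + Jac y q a = 0 := by
    simp only [Jac, pu, pv]
    linarith [e1, e2]
  -- differentiability for expanding pu/pv of sums
  have dx : DifferentiableAt ℝ x a := hx2.differentiableAt (by norm_num)
  have dy : DifferentiableAt ℝ y a := hy2.differentiableAt (by norm_num)
  have dp : DifferentiableAt ℝ p a := hp2.differentiableAt (by norm_num)
  have dq : DifferentiableAt ℝ q a := hq2.differentiableAt (by norm_num)
  have hpuadd : ∀ (f g : ℝ × ℝ → ℝ), DifferentiableAt ℝ f a → DifferentiableAt ℝ g a →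
      (pu (fun b => f b + g b) a = pu f a + pu g a ∧
       pv (fun b => f b + g b) a = pv f a + pv g a ∧
       pu (fun b => f b - g b) a = pu f a - pu g a ∧
       pv (fun b => f b - g b) a = pv f a - pv g a) := by
    intro f g hf hg
    refine ⟨?_, ?_, ?_, ?_⟩ <;> simp [pu, pv, fderiv_fun_add hf hg, fderiv_fun_sub hf hg]
  obtain ⟨a1, a2, a3, a4⟩ := hpuadd x q dx dq
  obtain ⟨b1, b2, b3, b4⟩ := hpuadd y p dy dp
  have hh := hhess a ha
  simp only [Jac] at hh key ⊢
  rw [a1, a3, b2, b4, b1, b3, a2, a4]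
  constructor
  · linear_combination hh - key
  · linear_combination hh + key
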